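/- For every p ∈ (1,2], the Banach–Mazur distance from ℓ_p^3 to ℓ_∞^3 is at most (1/10)·(4^p + 2)^{1/p}·(2·3^{p/(p−1)} + 1)^{(p−1)/p}. -/

import Mathlib

/-
Let `M = [[3/2, 3/2, -1], [3/2, -1, 3/2], [-1, 3/2, 3/2]]` and `a = (4^p + 2)^(1/p)`. The function
`x ↦ ‖M x‖_p^p` is convex, so on the cube it is largest at a vertex, where it equals `4^p + 2` or
`3·2^p ≤ 4^p + 2`; hence `a⁻¹ M` maps the cube into the `ℓ_p` ball. Conversely `M⁻¹ = N / 10`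
with `N = [[3, 3, -1], [3, -1, 3], [-1, 3, 3]]`, and by Hölder every coordinate of `N y` is at
most `‖y‖_p` times the `ℓ_q` norm `b = (2·3^q + 1)^(1/q)` of a row of `N`, `q = p/(p-1)`. So the
`ℓ_p` ball lies in `(a b / 10)` times the image of the cube.
-/

open scoped Pointwise

/-- The `p`-norm on `ℝ³` (for a real exponent `p ≥ 1`). -/
noncomputable def pnorm (p : ℝ) (x : Fin 3 → ℝ) : ℝ :=
  (∑ i, |x i| ^ p) ^ (1 / p)

/-- The unit ball of `ℓ_p^3`. -/
def ballP (p : ℝ) : Set (Fin 3 → ℝ) := {x | pnorm p x ≤ 1}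

/-- The unit ball of `ℓ_∞^3`. -/
def ballInf : Set (Fin 3 → ℝ) := {x | ∀ i, |x i| ≤ 1}

/-- The multiplicative Banach–Mazur distance between origin-symmetric convex
bodies: `inf {γ ≥ 1 : ∃ nonsingular linear T, T(L) ⊆ K ⊆ γ T(L)}`. -/
noncomputable def BMdist (K L : Set (Fin 3 → ℝ)) : ℝ :=
  sInf {γ : ℝ | 1 ≤ γ ∧ ∃ T : (Fin 3 → ℝ) ≃ₗ[ℝ] (Fin 3 → ℝ),
    (T : (Fin 3 → ℝ) →ₗ[ℝ] (Fin 3 → ℝ)) '' L ⊆ K ∧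
    K ⊆ γ • ((T : (Fin 3 → ℝ) →ₗ[ℝ] (Fin 3 → ℝ)) '' L)}

open Set Matrix

lemma convexOn_abs_rpow {p : ℝ} (hp : 1 ≤ p) : ConvexOn ℝ univ fun t : ℝ ↦ |t| ^ p := by
  refine ⟨convex_univ, fun x _ y _ a b ha hb hab ↦ ?_⟩
  calc |a • x + b • y| ^ p ≤ (a * |x| + b * |y|) ^ p := by
        refine Real.rpow_le_rpow (abs_nonneg _) ?_ (by linarith)
        simpa [abs_mul, abs_of_nonneg ha, abs_of_nonneg hb] using abs_add_le (a * x) (b * y)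
    _ ≤ a • |x| ^ p + b • |y| ^ p :=
        (convexOn_rpow hp).2 (abs_nonneg x) (abs_nonneg y) ha hb hab

lemma convexOn_sum_abs_rpow_mulVec {m n : Type*} [Fintype m] [Fintype n] {p : ℝ} (hp : 1 ≤ p)
    (A : Matrix m n ℝ) : ConvexOn ℝ univ fun x ↦ ∑ i, |(A *ᵥ x) i| ^ p := by
  have hrow (i : m) : ConvexOn ℝ univ fun x ↦ |(A *ᵥ x) i| ^ p :=
    (convexOn_abs_rpow hp).comp_linearMap ((LinearMap.proj i : (m → ℝ) →ₗ[ℝ] ℝ) ∘ₗ A.mulVecLin)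
  have h := Finset.sum_induction (s := Finset.univ) (fun i x ↦ |(A *ᵥ x) i| ^ p) (ConvexOn ℝ univ)
    (fun _ _ ↦ ConvexOn.add) (convexOn_const 0 convex_univ) fun i _ ↦ hrow i
  rwa [Finset.sum_fn] at h

lemma ConvexOn.exists_vertex_ge {ι : Type*} [Fintype ι] {f : (ι → ℝ) → ℝ}
    (hf : ConvexOn ℝ univ f) {x : ι → ℝ} (hx : ∀ i, |x i| ≤ 1) :
    ∃ v : ι → ℝ, (∀ i, v i = 1 ∨ v i = -1) ∧ f x ≤ f v := by
  classical
  -- Push the coordinates in `s` one at a time to the endpoint of their segment where `f` is larger.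
  suffices ∀ s : Finset ι,
      ∃ v : ι → ℝ, (∀ i, |v i| ≤ 1) ∧ (∀ i ∈ s, v i = 1 ∨ v i = -1) ∧ f x ≤ f v by
    obtain ⟨v, -, hv, hxv⟩ := this Finset.univ
    exact ⟨v, fun i ↦ hv i (Finset.mem_univ i), hxv⟩
  intro s
  induction s using Finset.induction_on with
  | empty => exact ⟨x, hx, by simp, le_rfl⟩
  | insert j s _ ih =>
    obtain ⟨v, hv1, hvs, hxv⟩ := ih
    have hvj : v ∈ segment ℝ (Function.update v j (-1)) (Function.update v j 1) := by
      rw [← Pi.image_update_segment, segment_eq_Icc (by norm_num)]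
      exact ⟨v j, abs_le.1 (hv1 j), Function.update_eq_self j v⟩
    have hle := hf.le_on_segment (mem_univ _) (mem_univ _) hvj
    have hupd (t : ℝ) (ht : t = 1 ∨ t = -1) :
        (∀ i, |Function.update v j t i| ≤ 1) ∧
          ∀ i ∈ insert j s, Function.update v j t i = 1 ∨ Function.update v j t i = -1 := by
      refine ⟨fun i ↦ ?_, fun i hi ↦ ?_⟩ <;> rcases eq_or_ne i j with rfl | hij
      · rcases ht with rfl | rfl <;> simp
      · simpa [hij] using hv1 i
      · simpa using ht
      · simpa [hij] using hvs i (by simpa [hij] using hi)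
    rcases le_max_iff.1 hle with h | h
    · exact ⟨_, (hupd (-1) (Or.inr rfl)).1, (hupd (-1) (Or.inr rfl)).2, hxv.trans h⟩
    · exact ⟨_, (hupd 1 (Or.inl rfl)).1, (hupd 1 (Or.inl rfl)).2, hxv.trans h⟩

lemma pnorm_smul {p : ℝ} (hp : p ≠ 0) {c : ℝ} (hc : 0 ≤ c) (x : Fin 3 → ℝ) :
    pnorm p (c • x) = c * pnorm p x := by
  simp only [pnorm, Pi.smul_apply, smul_eq_mul, abs_mul, abs_of_nonneg hc,
    Real.mul_rpow hc (abs_nonneg _), ← Finset.mul_sum]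
  rw [Real.mul_rpow (by positivity) (by positivity), ← Real.rpow_mul hc, mul_one_div_cancel hp,
    Real.rpow_one]

lemma abs_dotProduct_le_pnorm_mul {p q : ℝ} (hpq : p.HolderConjugate q) (x y : Fin 3 → ℝ) :
    |x ⬝ᵥ y| ≤ pnorm p x * (∑ i, |y i| ^ q) ^ (1 / q) :=
  calc |x ⬝ᵥ y| ≤ ∑ i, |x i| * |y i| := by
        simpa only [dotProduct, abs_mul] using Finset.abs_sum_le_sum_abs (fun i ↦ x i * y i) _
    _ ≤ pnorm p x * (∑ i, |y i| ^ q) ^ (1 / q) := by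
        simpa only [pnorm, abs_abs] using
          Real.inner_le_Lp_mul_Lq Finset.univ (fun i ↦ |x i|) (fun i ↦ |y i|) hpq

lemma BMdist_le_of_mul_eq_smul_one {K L : Set (Fin 3 → ℝ)} {M N : Matrix (Fin 3) (Fin 3) ℝ}
    {c α β : ℝ} (hc : 0 < c) (hα : 0 < α) (hβ : 0 < β) (hMN : M * N = c • 1)
    (hL : ∀ x ∈ L, α⁻¹ • M *ᵥ x ∈ K) (hK : ∀ y ∈ K, β⁻¹ • N *ᵥ y ∈ L) (hcαβ : c ≤ α * β) :
    BMdist K L ≤ α * β / c := by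
  have hAB : (α⁻¹ • M) * ((α / c) • N) = 1 := by
    rw [smul_mul_smul, hMN, smul_smul, show α⁻¹ * (α / c) * c = 1 by field_simp, one_smul]
  let T := toLin'OfInv (mul_eq_one_comm.1 hAB) hAB
  have hT (x : Fin 3 → ℝ) : (T : (Fin 3 → ℝ) →ₗ[ℝ] Fin 3 → ℝ) x = α⁻¹ • M *ᵥ x :=
    show (α⁻¹ • M) *ᵥ x = _ from smul_mulVec ..
  refine csInf_le ⟨1, fun _ h ↦ h.1⟩ ⟨(one_le_div hc).2 hcαβ, T, ?_, fun y hy ↦ ?_⟩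
  · rintro _ ⟨x, hx, rfl⟩
    exact hT x ▸ hL x hx
  · refine ⟨_, ⟨β⁻¹ • N *ᵥ y, hK y hy, rfl⟩, ?_⟩
    rw [hT, mulVec_smul, mulVec_mulVec, hMN, smul_mulVec, one_mulVec]
    simp only [smul_smul]
    rw [show α * β / c * (α⁻¹ * (β⁻¹ * c)) = 1 by field_simp, one_smul]

lemma three_mul_two_rpow_le {p : ℝ} (hp : 1 ≤ p) : 3 * (2 : ℝ) ^ p ≤ 4 ^ p + 2 := by
  have h2 : (2 : ℝ) ≤ 2 ^ p := by simpa using Real.rpow_le_rpow_of_exponent_le one_le_two hp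
  have h4 : (4 : ℝ) ^ p = 2 ^ p * 2 ^ p := by
    rw [← Real.mul_rpow zero_le_two zero_le_two]; norm_num
  nlinarith

noncomputable def Mmat : Matrix (Fin 3) (Fin 3) ℝ := !![3/2, 3/2, -1; 3/2, -1, 3/2; -1, 3/2, 3/2]

def Nmat : Matrix (Fin 3) (Fin 3) ℝ := !![3, 3, -1; 3, -1, 3; -1, 3, 3]

lemma Mmat_mul_Nmat : Mmat * Nmat = (10 : ℝ) • 1 := by
  ext i j
  fin_cases i <;> fin_cases j <;>
    norm_num [Mmat, Nmat, mul_apply, Fin.sum_univ_three, cons_val_two, tail_cons, head_cons]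

lemma sum_abs_rpow_Mmat_mulVec_le {p : ℝ} (hp : 1 ≤ p) {v : Fin 3 → ℝ}
    (hv : ∀ i, v i = 1 ∨ v i = -1) : ∑ i, |(Mmat *ᵥ v) i| ^ p ≤ 4 ^ p + 2 := by
  have := three_mul_two_rpow_le hp
  -- The vertices go to `±(2, 2, 2)` and to the permutations of `±(4, -1, -1)`.
  rcases hv 0 with h0 | h0 <;> rcases hv 1 with h1 | h1 <;> rcases hv 2 with h2 | h2 <;>
    norm_num [Mmat, mulVec, dotProduct, Fin.sum_univ_three, cons_val_two, tail_cons, head_cons,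
      h0, h1, h2] <;> linarith

lemma sum_abs_rpow_Nmat_row (q : ℝ) (i : Fin 3) : ∑ j, |Nmat i j| ^ q = 2 * 3 ^ q + 1 := by
  fin_cases i <;> norm_num [Nmat, Fin.sum_univ_three, cons_val_two, tail_cons, head_cons] <;> ring

lemma Mmat_mulVec_mem_ballP {p : ℝ} (hp : 1 ≤ p) {x : Fin 3 → ℝ} (hx : x ∈ ballInf) :
    (((4 : ℝ) ^ p + 2) ^ (1 / p))⁻¹ • Mmat *ᵥ x ∈ ballP p := by
  obtain ⟨v, hv, hxv⟩ := (convexOn_sum_abs_rpow_mulVec hp Mmat).exists_vertex_ge hx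
  show pnorm p _ ≤ 1
  rw [pnorm_smul (by positivity) (by positivity), inv_mul_le_one₀ (by positivity)]
  exact Real.rpow_le_rpow (by positivity) (hxv.trans (sum_abs_rpow_Mmat_mulVec_le hp hv))
    (by positivity)

lemma Nmat_mulVec_mem_ballInf {p q : ℝ} (hpq : p.HolderConjugate q) {y : Fin 3 → ℝ}
    (hy : y ∈ ballP p) : ((2 * (3 : ℝ) ^ q + 1) ^ (1 / q))⁻¹ • Nmat *ᵥ y ∈ ballInf := by
  intro i
  have hb : 0 < (2 * (3 : ℝ) ^ q + 1) ^ (1 / q) := by positivity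
  rw [Pi.smul_apply, smul_eq_mul, abs_mul, abs_inv, abs_of_pos hb, inv_mul_le_one₀ hb]
  calc |(Nmat *ᵥ y) i| = |y ⬝ᵥ Nmat i| := by rw [mulVec, dotProduct_comm]
    _ ≤ pnorm p y * (∑ j, |Nmat i j| ^ q) ^ (1 / q) := abs_dotProduct_le_pnorm_mul hpq y (Nmat i)
    _ ≤ (2 * 3 ^ q + 1) ^ (1 / q) := by
        rw [sum_abs_rpow_Nmat_row]
        exact mul_le_of_le_one_left hb.le hy

theorem bm_lp3_linf3_bound (p : ℝ) (hp1 : 1 < p) :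
    BMdist (ballP p) ballInf
      ≤ (1 / 10) * ((4 : ℝ) ^ p + 2) ^ (1 / p)
          * (2 * (3 : ℝ) ^ (p / (p - 1)) + 1) ^ ((p - 1) / p) := by
  have hpq : p.HolderConjugate (p / (p - 1)) := .conjExponent hp1
  have hp : 0 < p := by linarith
  set q := p / (p - 1)
  have hq : 0 < q := hpq.symm.pos
  have ha : 4 ≤ ((4 : ℝ) ^ p + 2) ^ (1 / p) := by
    rw [one_div, Real.le_rpow_inv_iff_of_pos (by norm_num) (by positivity) hp]
    linarith
  have hb : 3 ≤ (2 * (3 : ℝ) ^ q + 1) ^ (1 / q) := by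
    rw [one_div, Real.le_rpow_inv_iff_of_pos (by norm_num) (by positivity) hq]
    linarith [Real.rpow_pos_of_pos (show (0 : ℝ) < 3 by norm_num) q]
  rw [show (p - 1) / p = 1 / q by rw [one_div_div]]
  calc BMdist (ballP p) ballInf ≤ _ :=
        BMdist_le_of_mul_eq_smul_one (by norm_num) (by positivity) (by positivity) Mmat_mul_Nmat
          (fun x hx ↦ Mmat_mulVec_mem_ballP hp1.le hx) (fun y hy ↦ Nmat_mulVec_mem_ballInf hpq hy)
          (by nlinarith)
    _ = _ := by ring
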